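/- In a Banach algebra, if X·Y = q·(Y·X) with |q| < 1 and u = Y·X, then ‖u^n‖ ≤ |q|^(n(n−1)/2) · ‖Y‖^n · ‖X‖^n for all n ≥ 1; consequently ‖u^n‖^(1/n) = O(|q|^(n/2)). -/

import Mathlib

section QCommute

variable {R A : Type*} [CommMonoid R] [Monoid A] [MulAction R A] [IsScalarTower R A A]
  [SMulCommClass R A A] {q : R} {X Y : A}

theorem pow_mul_eq_smul_of_mul_eq_smul (h : X * Y = q • (Y * X)) (k : ℕ) :
    X ^ k * Y = q ^ k • (Y * X ^ k) := by
  induction k with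
  | zero => simp
  | succ k ih =>
    calc X ^ (k + 1) * Y = X ^ k * (X * Y) := by rw [pow_succ, mul_assoc]
      _ = q • ((X ^ k * Y) * X) := by rw [h, mul_smul_comm, mul_assoc]
      _ = q ^ (k + 1) • (Y * X ^ (k + 1)) := by
        rw [ih, smul_mul_assoc, smul_smul, ← pow_succ', mul_assoc, ← pow_succ]

theorem mul_pow_eq_smul_of_mul_eq_smul (h : X * Y = q • (Y * X)) (n : ℕ) :
    (Y * X) ^ n = q ^ n.choose 2 • (Y ^ n * X ^ n) := by
  induction n with
  | zero => simp
  | succ n ih =>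
    calc (Y * X) ^ (n + 1) = q ^ n.choose 2 • (Y ^ n * (X ^ n * Y) * X) := by
          rw [pow_succ, ih, smul_mul_assoc, mul_assoc, mul_assoc, mul_assoc]
      _ = q ^ (n.choose 2 + n) • (Y ^ n * Y * (X ^ n * X)) := by
          rw [pow_mul_eq_smul_of_mul_eq_smul h, mul_smul_comm, smul_mul_assoc, smul_smul,
            ← pow_add, mul_assoc, mul_assoc, mul_assoc]
      _ = q ^ (n + 1).choose 2 • (Y ^ (n + 1) * X ^ (n + 1)) := by
          rw [Nat.choose_succ_succ, Nat.choose_one_right, add_comm n, ← pow_succ, ← pow_succ]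

end QCommute

theorem norm_mul_pow_le_of_mul_eq_smul {𝕜 A : Type*} [NormedField 𝕜] [NormedRing A]
    [NormedAlgebra 𝕜 A] {q : 𝕜} {X Y : A} (h : X * Y = q • (Y * X)) {n : ℕ} (hn : 1 ≤ n) :
    ‖(Y * X) ^ n‖ ≤ ‖q‖ ^ n.choose 2 * ‖Y‖ ^ n * ‖X‖ ^ n := by
  rw [mul_pow_eq_smul_of_mul_eq_smul h, norm_smul, norm_pow, mul_assoc]
  gcongr
  calc ‖Y ^ n * X ^ n‖ ≤ ‖Y ^ n‖ * ‖X ^ n‖ := norm_mul_le _ _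
    _ ≤ ‖Y‖ ^ n * ‖X‖ ^ n := by gcongr <;> exact norm_pow_le' _ hn

theorem stmt_12_general {A : Type*} [NormedRing A] [NormedAlgebra ℂ A]
    (q : ℂ) (X Y : A) (h : X * Y = q • (Y * X))
    (u : A) (hu : u = Y * X) (n : ℕ) (hn : 1 ≤ n) :
    ‖u ^ n‖ ≤ ‖q‖ ^ (n * (n - 1) / 2) * ‖Y‖ ^ n * ‖X‖ ^ n := by
  rw [hu, ← Nat.choose_two_right]
  exact norm_mul_pow_le_of_mul_eq_smul h hn

/-- In a Banach algebra, if `X * Y = q • (Y * X)` with `|q| < 1` and `u = Y * X`, then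
`‖u ^ n‖ ≤ |q| ^ (n (n - 1) / 2) * ‖Y‖ ^ n * ‖X‖ ^ n` for all `n ≥ 1`. -/
theorem stmt_12 {A : Type*} [NormedRing A] [NormedAlgebra ℂ A]
    (q : ℂ) (hq : ‖q‖ < 1) (X Y : A) (h : X * Y = q • (Y * X))
    (u : A) (hu : u = Y * X) (n : ℕ) (hn : 1 ≤ n) :
    ‖u ^ n‖ ≤ ‖q‖ ^ (n * (n - 1) / 2) * ‖Y‖ ^ n * ‖X‖ ^ n :=
  stmt_12_general q X Y h u hu n hn
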